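/- arXiv:1502.02501 — 2 statements merged into one kernel-verified Lean document; each statement's English description precedes it below -/
import Mathlib

section
/- Let x₁, x₂ ∈ [0,1] and s₁, t₁, s₂, t₂ ≥ 0 satisfy (1-x₁)² ≥ s₁t₁ and (1-x₂)² ≥ s₂t₂. Then (1 - √(x₁x₂))² ≥ √((1-x₁)² - s₁t₁) · √((1-x₂)² - s₂t₂). -/
theorem one_sub_sqrt_sq_ge (x₁ x₂ s₁ t₁ s₂ t₂ : ℝ)
    (hx₁ : x₁ ∈ Set.Icc (0:ℝ) 1) (hx₂ : x₂ ∈ Set.Icc (0:ℝ) 1)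
    (hs₁ : 0 ≤ s₁) (ht₁ : 0 ≤ t₁) (hs₂ : 0 ≤ s₂) (ht₂ : 0 ≤ t₂)
    (h₁ : s₁ * t₁ ≤ (1 - x₁) ^ 2) (h₂ : s₂ * t₂ ≤ (1 - x₂) ^ 2) :
    Real.sqrt ((1 - x₁) ^ 2 - s₁ * t₁) * Real.sqrt ((1 - x₂) ^ 2 - s₂ * t₂)
      ≤ (1 - Real.sqrt (x₁ * x₂)) ^ 2 := by
  obtain ⟨hx₁0, hx₁1⟩ := hx₁
  obtain ⟨hx₂0, hx₂1⟩ := hx₂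
  have hst₁ : 0 ≤ s₁ * t₁ := mul_nonneg hs₁ ht₁
  have hst₂ : 0 ≤ s₂ * t₂ := mul_nonneg hs₂ ht₂
  have hA : Real.sqrt ((1 - x₁) ^ 2 - s₁ * t₁) ≤ 1 - x₁ := by
    calc Real.sqrt ((1 - x₁) ^ 2 - s₁ * t₁) ≤ Real.sqrt ((1 - x₁) ^ 2) :=
          Real.sqrt_le_sqrt (by linarith)
      _ = 1 - x₁ := by rw [Real.sqrt_sq (by linarith)]
  have hB : Real.sqrt ((1 - x₂) ^ 2 - s₂ * t₂) ≤ 1 - x₂ := by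
    calc Real.sqrt ((1 - x₂) ^ 2 - s₂ * t₂) ≤ Real.sqrt ((1 - x₂) ^ 2) :=
          Real.sqrt_le_sqrt (by linarith)
      _ = 1 - x₂ := by rw [Real.sqrt_sq (by linarith)]
  have hmul : Real.sqrt ((1 - x₁) ^ 2 - s₁ * t₁) * Real.sqrt ((1 - x₂) ^ 2 - s₂ * t₂)
      ≤ (1 - x₁) * (1 - x₂) :=
    mul_le_mul hA hB (Real.sqrt_nonneg _) (by linarith)
  have hs : Real.sqrt (x₁ * x₂) ^ 2 = x₁ * x₂ := Real.sq_sqrt (mul_nonneg hx₁0 hx₂0)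
  have hs0 : 0 ≤ Real.sqrt (x₁ * x₂) := Real.sqrt_nonneg _
  nlinarith [sq_nonneg (x₁ - x₂), sq_nonneg (x₁ + x₂ - 2 * Real.sqrt (x₁ * x₂))]
end

section
/- Let a₁, a₂, b₁, b₂, c₁, c₂ be nonnegative reals with (1-a₁)² > b₁c₁ and (1-a₂)² > b₂c₂, a₁, a₂ ∈ [0,1). Define Δᵢ = (1-aᵢ)² - bᵢcᵢ > 0. If a, b, c are nonnegative reals with a ≤ √(a₁a₂), b ≤ √(b₁b₂), c ≤ √(c₁c₂), then (1-a)² - bc ≥ √(Δ₁Δ₂) > 0. -/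
lemma amgm_aux (p q : ℝ) : (1 - p ^ 2) * (1 - q ^ 2) ≤ (1 - p * q) ^ 2 := by
  nlinarith [sq_nonneg (p - q)]

lemma cauchy_aux (d₁ d₂ s t : ℝ) : (d₁ * d₂ + s * t) ^ 2 ≤ (d₁ ^ 2 + s ^ 2) * (d₂ ^ 2 + t ^ 2) := by
  nlinarith [sq_nonneg (d₁ * t - d₂ * s)]

lemma my_le_of_sq (x y : ℝ) (hx : 0 ≤ x) (hy : 0 ≤ y) (h : x ^ 2 ≤ y ^ 2) : x ≤ y := by
  nlinarith

theorem delta_lower_bound (a₁ a₂ b₁ b₂ c₁ c₂ a b c : ℝ)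
    (ha₁ : a₁ ∈ Set.Ico (0:ℝ) 1) (ha₂ : a₂ ∈ Set.Ico (0:ℝ) 1)
    (hb₁ : 0 ≤ b₁) (hb₂ : 0 ≤ b₂) (hc₁ : 0 ≤ c₁) (hc₂ : 0 ≤ c₂)
    (h₁ : b₁ * c₁ < (1 - a₁) ^ 2) (h₂ : b₂ * c₂ < (1 - a₂) ^ 2)
    (ha : 0 ≤ a) (hb : 0 ≤ b) (hc : 0 ≤ c)
    (haa : a ≤ Real.sqrt (a₁ * a₂)) (hbb : b ≤ Real.sqrt (b₁ * b₂))
    (hcc : c ≤ Real.sqrt (c₁ * c₂)) :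
    Real.sqrt (((1 - a₁) ^ 2 - b₁ * c₁) * ((1 - a₂) ^ 2 - b₂ * c₂)) ≤ (1 - a) ^ 2 - b * c ∧
      0 < Real.sqrt (((1 - a₁) ^ 2 - b₁ * c₁) * ((1 - a₂) ^ 2 - b₂ * c₂)) := by
  obtain ⟨ha₁0, ha₁1⟩ := ha₁
  obtain ⟨ha₂0, ha₂1⟩ := ha₂
  have hΔ₁0 : (0:ℝ) < (1 - a₁) ^ 2 - b₁ * c₁ := by linarith
  have hΔ₂0 : (0:ℝ) < (1 - a₂) ^ 2 - b₂ * c₂ := by linarith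
  have hpos : 0 < Real.sqrt (((1 - a₁) ^ 2 - b₁ * c₁) * ((1 - a₂) ^ 2 - b₂ * c₂)) :=
    Real.sqrt_pos.mpr (by positivity)
  refine ⟨?_, hpos⟩
  set D₁ := Real.sqrt ((1 - a₁) ^ 2 - b₁ * c₁) with hD₁
  set D₂ := Real.sqrt ((1 - a₂) ^ 2 - b₂ * c₂) with hD₂
  have hD₁sq : D₁ ^ 2 = (1 - a₁) ^ 2 - b₁ * c₁ := Real.sq_sqrt hΔ₁0.le
  have hD₂sq : D₂ ^ 2 = (1 - a₂) ^ 2 - b₂ * c₂ := Real.sq_sqrt hΔ₂0.le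
  have hD₁n : 0 ≤ D₁ := Real.sqrt_nonneg _
  have hD₂n : 0 ≤ D₂ := Real.sqrt_nonneg _
  have hprod : Real.sqrt (((1 - a₁) ^ 2 - b₁ * c₁) * ((1 - a₂) ^ 2 - b₂ * c₂)) = D₁ * D₂ :=
    Real.sqrt_mul hΔ₁0.le _
  rw [hprod]
  set s := Real.sqrt (b₁ * c₁) with hs
  set t := Real.sqrt (b₂ * c₂) with ht
  have hssq : s ^ 2 = b₁ * c₁ := Real.sq_sqrt (by positivity)
  have htsq : t ^ 2 = b₂ * c₂ := Real.sq_sqrt (by positivity)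
  have hsn : 0 ≤ s := Real.sqrt_nonneg _
  have htn : 0 ≤ t := Real.sqrt_nonneg _
  -- step 1 : b*c ≤ s*t
  have hbc : b * c ≤ s * t := by
    calc b * c ≤ Real.sqrt (b₁ * b₂) * Real.sqrt (c₁ * c₂) :=
          mul_le_mul hbb hcc hc (Real.sqrt_nonneg _)
      _ = s * t := by
          rw [hs, ht, ← Real.sqrt_mul (by positivity), ← Real.sqrt_mul (by positivity)]
          ring_nf
  -- step 2 : (1 - √(a₁a₂))^2 ≤ (1-a)^2
  have hA : Real.sqrt (a₁ * a₂) = Real.sqrt a₁ * Real.sqrt a₂ := Real.sqrt_mul ha₁0 _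
  have h1 : Real.sqrt a₁ < 1 := by
    rw [show (1:ℝ) = Real.sqrt 1 by simp]
    exact Real.sqrt_lt_sqrt ha₁0 ha₁1
  have h2 : Real.sqrt a₂ < 1 := by
    rw [show (1:ℝ) = Real.sqrt 1 by simp]
    exact Real.sqrt_lt_sqrt ha₂0 ha₂1
  have hA1 : Real.sqrt (a₁ * a₂) < 1 := by
    rw [hA]
    nlinarith [Real.sqrt_nonneg a₁, Real.sqrt_nonneg a₂]
  have hsqa : (1 - Real.sqrt (a₁ * a₂)) ^ 2 ≤ (1 - a) ^ 2 := by
    apply pow_le_pow_left₀ (by linarith) (by linarith)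
  -- step 4 : (1-a₁)*(1-a₂) ≤ (1 - √(a₁a₂))^2
  have hstep4 : (1 - a₁) * (1 - a₂) ≤ (1 - Real.sqrt (a₁ * a₂)) ^ 2 := by
    calc (1 - a₁) * (1 - a₂) = (1 - Real.sqrt a₁ ^ 2) * (1 - Real.sqrt a₂ ^ 2) := by
          rw [Real.sq_sqrt ha₁0, Real.sq_sqrt ha₂0]
      _ ≤ (1 - Real.sqrt a₁ * Real.sqrt a₂) ^ 2 := amgm_aux _ _
      _ = (1 - Real.sqrt (a₁ * a₂)) ^ 2 := by rw [hA]
  -- step 3 : D₁*D₂ + s*t ≤ (1-a₁)*(1-a₂)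
  have hstep3 : D₁ * D₂ + s * t ≤ (1 - a₁) * (1 - a₂) := by
    apply my_le_of_sq _ _ (by positivity)
      (mul_nonneg (by linarith) (by linarith))
    calc (D₁ * D₂ + s * t) ^ 2 ≤ (D₁ ^ 2 + s ^ 2) * (D₂ ^ 2 + t ^ 2) := cauchy_aux _ _ _ _
      _ = ((1 - a₁) * (1 - a₂)) ^ 2 := by rw [hD₁sq, hD₂sq, hssq, htsq]; ring
  -- combine
  have hmid : (1 - Real.sqrt (a₁ * a₂)) ^ 2 ≤ (1 - a) ^ 2 := hsqa
  linarith
end
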